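/- With T_h, T_o, T_t as in the adaptive foot model and assuming tan α₁, tan α₂, tan α_H > 0 and tan α₁ tan α_H < 1, we have T_h ≥ 0 and T_o ≥ 0 iff x_com ≤ L, and T_t ≥ 0 iff x_com (1 + tan α₂ tan α_H) ≥ L tan α₂ tan α_H, i.e. x_com ≥ L tan α₂ tan α_H/(1 + tan α₂ tan α_H); hence all three contact forces are nonnegative iff L tan α₂ tan α_H/(1 + tan α₂ tan α_H) ≤ x_com ≤ L. -/
import Mathlib


/-- Admissibility region of the adaptive foot contact forces: `T_h, T_o ≥ 0`
iff `x ≤ L`, and `T_t ≥ 0` iff `x ≥ L tan α₂ tan α_H / (1 + tan α₂ tan α_H)`. -/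
theorem adaptive_foot_admissibility
    (P L α₁ α₂ αH x : ℝ) (hP : 0 < P) (hL : 0 < L)
    (ht1 : 0 < Real.tan α₁) (ht2 : 0 < Real.tan α₂) (htH : 0 < Real.tan αH)
    (hlt : Real.tan α₁ * Real.tan αH < 1) :
    ((0 ≤ P * ((L - x) / L) * (1 - Real.tan α₁ * Real.tan αH) ∧
      0 ≤ P * ((L - x) / L) * (Real.tan α₁ + Real.tan α₂) * Real.tan αH) ↔ x ≤ L) ∧
    (0 ≤ P * ((x - L) * (Real.tan α₂ * Real.tan αH) + x) / L ↔
      x ≥ L * (Real.tan α₂ * Real.tan αH) / (1 + Real.tan α₂ * Real.tan αH)) := by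
  set t1 := Real.tan α₁
  set t2 := Real.tan α₂
  set tH := Real.tan αH
  have h1 : 0 < 1 - t1 * tH := by linarith
  have hden : 0 < 1 + t2 * tH := by positivity
  constructor
  · constructor
    · rintro ⟨h, -⟩
      have hfrac : 0 ≤ (L - x) / L := by
        by_contra hc
        push_neg at hc
        nlinarith [mul_pos hP h1]
      have := (div_nonneg_iff.mp hfrac)
      rcases this with ⟨h2, -⟩ | ⟨-, h3⟩
      · linarith
      · linarith
    · intro hx
      have hfrac : 0 ≤ (L - x) / L := div_nonneg (by linarith) hL.le
      constructor
      · positivity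
      · positivity
  · rw [ge_iff_le, div_le_iff₀ hden, le_div_iff₀ hL]
    constructor
    · intro h; nlinarith
    · intro h; nlinarith
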